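/- arXiv:2511.04291 — 8 statements merged into one kernel-verified Lean document; each statement's English description precedes it below -/
import Mathlib

section
/- For r ≥ 2, the intersection of the sphere {x ∈ R^r : e^T x = 1, ‖x − e/r‖² = 1/(r−1) − 1/r} with the boundary of the unit simplex Δ^r consists exactly of the r points (e − e_i)/(r−1) for i = 1,…,r, i.e. any point x of Δ^r with some zero coordinate and ‖x‖² ≤ 1/(r−1) must be of the form (e − e_i)/(r−1). -/
/-!
Dropping a zero coordinate leaves `r - 1` weights with sum `1` and sum of squares at most
`1 / (r - 1)`. Their variance `∑ (x j - 1/(r-1))² = ∑ x j² - 1/(r-1)` is then `≤ 0`, so every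
remaining weight equals the mean `1 / (r - 1)`.
-/

open Finset

theorem Finset.eq_one_div_card_of_sum_eq_one_of_sum_sq_le {ι : Type*} {s : Finset ι}
    {x : ι → ℝ} (hsum : ∑ j ∈ s, x j = 1) (hsq : ∑ j ∈ s, x j ^ 2 ≤ 1 / #s) :
    ∀ j ∈ s, x j = 1 / #s := by
  have hcard : (#s : ℝ) ≠ 0 := by
    have : s.Nonempty := Finset.nonempty_of_sum_ne_zero (by rw [hsum]; exact one_ne_zero)
    exact_mod_cast this.card_pos.ne'
  have hvariance : ∑ j ∈ s, (x j - 1 / #s) ^ 2 = ∑ j ∈ s, x j ^ 2 - 1 / #s := by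
    simp only [sub_sq, sum_add_distrib, sum_sub_distrib, ← sum_mul, ← mul_sum, hsum,
      sum_const, nsmul_eq_mul]
    field_simp
    ring
  have hzero : ∑ j ∈ s, (x j - 1 / #s) ^ 2 = 0 :=
    le_antisymm (by linarith) (sum_nonneg fun j _ => sq_nonneg _)
  intro j hj
  have hj0 := (sum_eq_zero_iff_of_nonneg fun j _ => sq_nonneg (x j - 1 / #s)).1 hzero j hj
  linarith [pow_eq_zero_iff (n := 2) two_ne_zero |>.1 hj0]

theorem stmt3_general (r : ℕ) :
    ∀ x : EuclideanSpace ℝ (Fin r), (∀ i, 0 ≤ x i) → ∑ i, x i = 1 →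
      (∃ i, x i = 0) → ‖x‖ ^ 2 ≤ 1 / ((r : ℝ) - 1) →
      ∃ i : Fin r, x = (WithLp.equiv 2 (Fin r → ℝ)).symm
        (fun j => if j = i then 0 else 1 / ((r : ℝ) - 1)) := by
  rintro x - hsum ⟨i, hi⟩ hnorm
  have hcard : (#(univ.erase i) : ℝ) = r - 1 := by
    rw [card_erase_of_mem (mem_univ i), card_univ, Fintype.card_fin, Nat.cast_pred i.pos]
  have hsum' : ∑ j ∈ univ.erase i, x j = 1 := by rwa [sum_erase univ hi]
  have hsq' : ∑ j ∈ univ.erase i, x j ^ 2 ≤ 1 / #(univ.erase i) := by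
    rwa [sum_erase univ (by simp [hi]), hcard, ← EuclideanSpace.real_norm_sq_eq]
  have hmean := eq_one_div_card_of_sum_eq_one_of_sum_sq_le hsum' hsq'
  rw [hcard] at hmean
  refine ⟨i, PiLp.ext fun j => ?_⟩
  by_cases hji : j = i
  · simp [hji, hi]
  · simp [hji, hmean j (mem_erase.2 ⟨hji, mem_univ j⟩)]

/-- For `r ≥ 2`, any point of the unit simplex with a zero coordinate and
`‖x‖² ≤ 1/(r-1)` must be one of the points `(e - e_i)/(r-1)`. -/
theorem stmt3 (r : ℕ) (hr : 2 ≤ r) :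
    ∀ x : EuclideanSpace ℝ (Fin r), (∀ i, 0 ≤ x i) → ∑ i, x i = 1 →
      (∃ i, x i = 0) → ‖x‖ ^ 2 ≤ 1 / ((r : ℝ) - 1) →
      ∃ i : Fin r, x = (WithLp.equiv 2 (Fin r → ℝ)).symm
        (fun j => if j = i then 0 else 1 / ((r : ℝ) - 1)) :=
  stmt3_general r
end

section
/- For 1 ≤ p ≤ √r and q = √(r − p²), the dual cone of S_p = {x ∈ R^r : e^T x ≥ p‖x‖} is S_q, i.e. {y : x^T y ≥ 0 for all x ∈ S_p} = {y : e^T y ≥ q‖y‖}. -/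
/-!
Write `u = e / ‖e‖` and split every vector as `x = a • u + x'` with `x' ⟂ u`. When
`p ^ 2 + q ^ 2 = ‖e‖ ^ 2`, the condition `p * ‖x‖ ≤ ⟪e, x⟫` becomes `0 ≤ a ∧ p * ‖x'‖ ≤ q * a`,
so the question reduces to the plane spanned by the axis and a radial direction, where the two
cones have complementary half-angles. Hence `⟪x, y⟫ = a * b + ⟪x', y'⟫ ≥ a * b - ‖x'‖ * ‖y'‖ ≥ 0`
for `x ∈ S_p`, `y ∈ S_q`; conversely, testing `y` against `u` and against
`p ‖y'‖ • u - q • y' ∈ S_p` shows that `y ∈ S_q`.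
-/

open scoped BigOperators RealInnerProductSpace

/-- Two planar cones with complementary half-angles are dual to each other. -/
lemma mul_le_mul_of_complementary_slopes {p q a b X Y : ℝ} (hp : 0 ≤ p) (hq : 0 ≤ q)
    (hpq : 0 < p ^ 2 + q ^ 2) (ha : 0 ≤ a) (hb : 0 ≤ b) (hX : 0 ≤ X) (hY : 0 ≤ Y)
    (hx : p * X ≤ q * a) (hy : q * Y ≤ p * b) : X * Y ≤ a * b := by
  have h₁ : p ^ 2 * (X * Y) ≤ p ^ 2 * (a * b) :=
    calc p ^ 2 * (X * Y) = p * Y * (p * X) := by ring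
      _ ≤ p * Y * (q * a) := by gcongr
      _ = p * a * (q * Y) := by ring
      _ ≤ p * a * (p * b) := by gcongr
      _ = p ^ 2 * (a * b) := by ring
  have h₂ : q ^ 2 * (X * Y) ≤ q ^ 2 * (a * b) :=
    calc q ^ 2 * (X * Y) = q * X * (q * Y) := by ring
      _ ≤ q * X * (p * b) := by gcongr
      _ = q * b * (p * X) := by ring
      _ ≤ q * b * (q * a) := by gcongr
      _ = q ^ 2 * (a * b) := by ring
  have := add_le_add h₁ h₂
  rw [← add_mul, ← add_mul] at this
  exact le_of_mul_le_mul_left this hpq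

section

variable {E : Type*} [NormedAddCommGroup E] [InnerProductSpace ℝ E]

def circularCone (e : E) (c : ℝ) : Set E := {x | c * ‖x‖ ≤ ⟪e, x⟫}

def perpComponent (u x : E) : E := x - ⟪u, x⟫ • u

variable {u : E}

lemma inner_eq_inner_mul_inner_add_inner_perpComponent (hu : ‖u‖ = 1) (x y : E) :
    ⟪x, y⟫ = ⟪u, x⟫ * ⟪u, y⟫ + ⟪perpComponent u x, perpComponent u y⟫ := by
  have huu : ⟪u, u⟫ = 1 := by rw [real_inner_self_eq_norm_sq, hu, one_pow]
  simp only [perpComponent, inner_sub_left, inner_sub_right, real_inner_smul_left,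
    real_inner_smul_right, huu, real_inner_comm x u, real_inner_comm y u]
  ring

lemma norm_sq_eq_inner_sq_add_norm_perpComponent_sq (hu : ‖u‖ = 1) (x : E) :
    ‖x‖ ^ 2 = ⟪u, x⟫ ^ 2 + ‖perpComponent u x‖ ^ 2 := by
  rw [← real_inner_self_eq_norm_sq, ← real_inner_self_eq_norm_sq,
    inner_eq_inner_mul_inner_add_inner_perpComponent hu, sq]

lemma mul_norm_le_mul_inner_iff (hu : ‖u‖ = 1) {n p q : ℝ} (hn : 0 < n) (hp : 0 ≤ p)
    (hq : 0 ≤ q) (hpq : p ^ 2 + q ^ 2 = n ^ 2) (x : E) :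
    p * ‖x‖ ≤ n * ⟪u, x⟫ ↔ 0 ≤ ⟪u, x⟫ ∧ p * ‖perpComponent u x‖ ≤ q * ⟪u, x⟫ := by
  have hx := norm_sq_eq_inner_sq_add_norm_perpComponent_sq hu x
  constructor
  · intro h
    have ha : 0 ≤ ⟪u, x⟫ := nonneg_of_mul_nonneg_right (le_trans (by positivity) h) hn
    refine ⟨ha, (sq_le_sq₀ (by positivity) (by positivity)).1 ?_⟩
    have := (sq_le_sq₀ (by positivity) (by positivity)).2 h
    nlinarith
  · rintro ⟨ha, h⟩
    refine (sq_le_sq₀ (by positivity) (by positivity)).1 ?_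
    have := (sq_le_sq₀ (by positivity) (by positivity)).2 h
    nlinarith

lemma inner_perpComponent_eq_zero (hu : ‖u‖ = 1) (x : E) : ⟪u, perpComponent u x⟫ = 0 := by
  rw [perpComponent, inner_sub_right, real_inner_smul_right, real_inner_self_eq_norm_sq, hu]
  ring

lemma mem_circularCone_iff {e : E} (he : e ≠ 0) {p q : ℝ} (hp : 0 ≤ p) (hq : 0 ≤ q)
    (hpq : p ^ 2 + q ^ 2 = ‖e‖ ^ 2) (x : E) :
    x ∈ circularCone e p ↔
      0 ≤ ⟪‖e‖⁻¹ • e, x⟫ ∧ p * ‖perpComponent (‖e‖⁻¹ • e) x‖ ≤ q * ⟪‖e‖⁻¹ • e, x⟫ := by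
  have hn : 0 < ‖e‖ := norm_pos_iff.2 he
  have hu : ‖‖e‖⁻¹ • e‖ = 1 := norm_smul_inv_norm he
  change p * ‖x‖ ≤ ⟪e, x⟫ ↔ _
  rw [← mul_norm_le_mul_inner_iff hu hn hp hq hpq, real_inner_smul_left,
    mul_inv_cancel_left₀ hn.ne']

lemma inner_nonneg_of_mul_norm_perpComponent_le (hu : ‖u‖ = 1) {p q : ℝ} (hp : 0 ≤ p)
    (hq : 0 ≤ q) (hpq : 0 < p ^ 2 + q ^ 2) {x y : E}
    (hx : 0 ≤ ⟪u, x⟫ ∧ p * ‖perpComponent u x‖ ≤ q * ⟪u, x⟫)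
    (hy : 0 ≤ ⟪u, y⟫ ∧ q * ‖perpComponent u y‖ ≤ p * ⟪u, y⟫) : 0 ≤ ⟪x, y⟫ := by
  have hXY := mul_le_mul_of_complementary_slopes hp hq hpq hx.1 hy.1
    (norm_nonneg _) (norm_nonneg _) hx.2 hy.2
  have hcs := neg_le_of_abs_le (abs_real_inner_le_norm (perpComponent u x) (perpComponent u y))
  rw [inner_eq_inner_mul_inner_add_inner_perpComponent hu]
  linarith

lemma mul_norm_perpComponent_le_of_forall_inner_nonneg (hu : ‖u‖ = 1) {p q : ℝ} (hp : 0 ≤ p)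
    (hq : 0 ≤ q) {y : E}
    (hy : ∀ x, 0 ≤ ⟪u, x⟫ ∧ p * ‖perpComponent u x‖ ≤ q * ⟪u, x⟫ → 0 ≤ ⟪x, y⟫) :
    0 ≤ ⟪u, y⟫ ∧ q * ‖perpComponent u y‖ ≤ p * ⟪u, y⟫ := by
  have hb : 0 ≤ ⟪u, y⟫ := by
    simpa [real_inner_comm] using hy u (by simp [perpComponent, hu, hq])
  refine ⟨hb, ?_⟩
  set Y := ‖perpComponent u y‖
  set x := (p * Y) • u - q • perpComponent u y
  have hux : ⟪u, x⟫ = p * Y := by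
    simp [x, inner_sub_right, real_inner_smul_right, inner_perpComponent_eq_zero hu, hu]
  have hperp : perpComponent u x = -(q • perpComponent u y) := by
    rw [perpComponent, hux]
    simp [x]
  have hx : 0 ≤ ⟪u, x⟫ ∧ p * ‖perpComponent u x‖ ≤ q * ⟪u, x⟫ := by
    rw [hux, hperp, norm_neg, norm_smul, Real.norm_of_nonneg hq]
    exact ⟨by positivity, le_of_eq (by ring)⟩
  have hxy : ⟪x, y⟫ = Y * (p * ⟪u, y⟫ - q * Y) := by
    rw [inner_eq_inner_mul_inner_add_inner_perpComponent hu, hux, hperp, inner_neg_left,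
      real_inner_smul_left, real_inner_self_eq_norm_sq]
    ring
  rcases (norm_nonneg _ : 0 ≤ Y).eq_or_lt with hY | hY
  · rw [show Y = 0 from hY.symm, mul_zero]
    positivity
  · have := hy x hx
    rw [hxy] at this
    linarith [nonneg_of_mul_nonneg_right this hY]

theorem innerDual_circularCone {e : E} (he : e ≠ 0) {p q : ℝ} (hp : 0 ≤ p) (hq : 0 ≤ q)
    (hpq : p ^ 2 + q ^ 2 = ‖e‖ ^ 2) :
    {y | ∀ x ∈ circularCone e p, 0 ≤ ⟪x, y⟫} = circularCone e q := by
  have hu : ‖‖e‖⁻¹ • e‖ = 1 := norm_smul_inv_norm he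
  have hpq_pos : 0 < p ^ 2 + q ^ 2 := by rw [hpq]; positivity
  have hmem_p := mem_circularCone_iff he hp hq hpq
  have hmem_q := mem_circularCone_iff he hq hp (by rw [add_comm, hpq])
  generalize ‖e‖⁻¹ • e = u at hu hmem_p hmem_q
  ext y
  change (∀ x ∈ circularCone e p, 0 ≤ ⟪x, y⟫) ↔ y ∈ circularCone e q
  rw [hmem_q]
  constructor
  · exact fun hy ↦ mul_norm_perpComponent_le_of_forall_inner_nonneg hu hp hq
      fun x hx ↦ hy x ((hmem_p x).2 hx)
  · exact fun hy x hx ↦ inner_nonneg_of_mul_norm_perpComponent_le hu hp hq hpq_pos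
      ((hmem_p x).1 hx) hy

end

/-- For `1 ≤ p ≤ √r` and `q = √(r - p²)`, the dual cone of
`S_p = {x : e^T x ≥ p‖x‖}` is `S_q`. -/
theorem stmt5 (r : ℕ) (hr : 1 ≤ r) (p : ℝ) (hp1 : 1 ≤ p) (hpr : p ≤ Real.sqrt r) :
    {y : EuclideanSpace ℝ (Fin r) |
        ∀ x : EuclideanSpace ℝ (Fin r), p * ‖x‖ ≤ ∑ i, x i → 0 ≤ ⟪x, y⟫}
      = {y : EuclideanSpace ℝ (Fin r) |
          Real.sqrt ((r : ℝ) - p ^ 2) * ‖y‖ ≤ ∑ i, y i} := by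
  have hp : 0 ≤ p := zero_le_one.trans hp1
  set e : EuclideanSpace ℝ (Fin r) := WithLp.toLp 2 (fun _ ↦ 1)
  have hsum : ∀ z : EuclideanSpace ℝ (Fin r), ∑ i, z i = ⟪e, z⟫ := fun z ↦ by
    simp [e, PiLp.inner_apply]
  have he : ‖e‖ ^ 2 = r := by
    rw [← real_inner_self_eq_norm_sq, ← hsum]
    simp [e]
  have hp_sq : p ^ 2 ≤ r := (Real.le_sqrt hp r.cast_nonneg).1 hpr
  simp only [hsum]
  refine innerDual_circularCone ?_ hp (Real.sqrt_nonneg _) ?_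
  · intro h
    rw [h, norm_zero] at he
    norm_cast at he
    omega
  · rw [Real.sq_sqrt (by linarith), he]
    ring
end

section
/- Let p, q > 0 with p² + q² = r. For any x with e^T x = 1 and ‖x − e/r‖² ≤ 1/p² − 1/r, and any y with e^T y = 1 and ‖y − e/r‖² ≤ 1/q² − 1/r, the inner product x^T y is nonnegative. -/
open scoped BigOperators RealInnerProductSpace

noncomputable def simplexCenter (r : ℕ) : EuclideanSpace ℝ (Fin r) :=
  (WithLp.equiv 2 (Fin r → ℝ)).symm fun _ => (r : ℝ)⁻¹

/-! Shifting by the center `e / r` turns `x^T y` into `(x - e/r)^T (y - e/r) + 1/r`, and by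
Cauchy–Schwarz the shifted inner product is at least `-‖x - e/r‖ ‖y - e/r‖`. The radii are matched
by `p² + q² = r`: `(1/p² - 1/r) (1/q² - 1/r) = 1/r²`, so this lower bound is exactly `-1/r`. -/

theorem inv_sub_inv_add_mul_inv_sub_inv_add {K : Type*} [Field K] {a b : K}
    (ha : a ≠ 0) (hb : b ≠ 0) (hab : a + b ≠ 0) :
    (a⁻¹ - (a + b)⁻¹) * (b⁻¹ - (a + b)⁻¹) = ((a + b)⁻¹) ^ 2 := by
  field_simp
  ring

theorem neg_le_real_inner_of_norm_sq_le {E : Type*} [NormedAddCommGroup E]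
    [InnerProductSpace ℝ E] {a b : E} {α β γ : ℝ} (ha : ‖a‖ ^ 2 ≤ α) (hb : ‖b‖ ^ 2 ≤ β)
    (hαβ : α * β ≤ γ ^ 2) (hγ : 0 ≤ γ) : -γ ≤ ⟪a, b⟫ := by
  have hnorm : ‖a‖ * ‖b‖ ≤ γ := by
    refine pow_le_pow_iff_left₀ (by positivity) hγ two_ne_zero |>.mp ?_
    calc (‖a‖ * ‖b‖) ^ 2 = ‖a‖ ^ 2 * ‖b‖ ^ 2 := mul_pow _ _ _
      _ ≤ α * β := mul_le_mul ha hb (by positivity) ((sq_nonneg _).trans ha)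
      _ ≤ γ ^ 2 := hαβ
  linarith [neg_le_of_abs_le (abs_real_inner_le_norm a b)]

theorem inner_simplexCenter_left (r : ℕ) (x : EuclideanSpace ℝ (Fin r)) :
    ⟪simplexCenter r, x⟫ = (r : ℝ)⁻¹ * ∑ i, x i := by
  simp [simplexCenter, PiLp.inner_apply, Finset.sum_mul, mul_comm]

theorem inner_sub_simplexCenter {r : ℕ} (hr : (r : ℝ) ≠ 0) {x y : EuclideanSpace ℝ (Fin r)}
    (hx : ∑ i, x i = 1) (hy : ∑ i, y i = 1) :
    ⟪x - simplexCenter r, y - simplexCenter r⟫ = ⟪x, y⟫ - (r : ℝ)⁻¹ := by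
  have hcc : ⟪simplexCenter r, simplexCenter r⟫ = (r : ℝ)⁻¹ := by
    rw [inner_simplexCenter_left]
    simp [simplexCenter, hr]
  rw [inner_sub_left, inner_sub_right, inner_sub_right, real_inner_comm (simplexCenter r) x,
    inner_simplexCenter_left, inner_simplexCenter_left, hx, hy, hcc]
  ring

theorem stmt6_general (r : ℕ) (p q : ℝ) (hp : 0 < p) (hq : 0 < q)
    (hpq : p ^ 2 + q ^ 2 = (r : ℝ))
    (x y : EuclideanSpace ℝ (Fin r))
    (hx1 : ∑ i, x i = 1) (hx2 : ‖x - simplexCenter r‖ ^ 2 ≤ 1 / p ^ 2 - 1 / (r : ℝ))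
    (hy1 : ∑ i, y i = 1) (hy2 : ‖y - simplexCenter r‖ ^ 2 ≤ 1 / q ^ 2 - 1 / (r : ℝ)) :
    0 ≤ ⟪x, y⟫ := by
  have hr : (0 : ℝ) < r := hpq ▸ by positivity
  have hradii : (1 / p ^ 2 - 1 / (r : ℝ)) * (1 / q ^ 2 - 1 / (r : ℝ)) = ((r : ℝ)⁻¹) ^ 2 := by
    simp only [one_div, ← hpq]
    exact inv_sub_inv_add_mul_inv_sub_inv_add (by positivity) (by positivity) (by positivity)
  have hbound := neg_le_real_inner_of_norm_sq_le hx2 hy2 hradii.le (inv_nonneg.mpr hr.le)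
  rw [inner_sub_simplexCenter hr.ne' hx1 hy1] at hbound
  linarith

/-- If `p² + q² = r`, then any `x ∈ Q_p` and `y ∈ Q_q` satisfy `x^T y ≥ 0`. -/
theorem stmt6 (r : ℕ) (hr : 1 ≤ r) (p q : ℝ) (hp : 0 < p) (hq : 0 < q)
    (hpq : p ^ 2 + q ^ 2 = (r : ℝ))
    (x y : EuclideanSpace ℝ (Fin r))
    (hx1 : ∑ i, x i = 1) (hx2 : ‖x - simplexCenter r‖ ^ 2 ≤ 1 / p ^ 2 - 1 / (r : ℝ))
    (hy1 : ∑ i, y i = 1) (hy2 : ‖y - simplexCenter r‖ ^ 2 ≤ 1 / q ^ 2 - 1 / (r : ℝ)) :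
    0 ≤ ⟪x, y⟫ :=
  stmt6_general r p q hp hq hpq x y hx1 hx2 hy1 hy2
end

section
/- With H_p = α_p E + (1 − rα_p) I and α_p as above, the inverse of H_p is (1 − rα_p)^{-1}(−α_p E + I), and the induced 1-norm of H_p^{-1} (maximum column ℓ1-norm) equals (1/r)[2(r−1)^{3/2}(p/q) − (r−2)], which satisfies √(r−1)·(p/q) ≤ ‖H_p^{-1}‖_1 ≤ 2√(r−1)·(p/q) − 1 ≤ 2r − 3. -/
open scoped BigOperators

/-- The matrix `H_p = α E + (1 - r α) I`, where `E` is the all-ones matrix. -/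
noncomputable def HpMatrix (r : ℕ) (α : ℝ) : Matrix (Fin r) (Fin r) ℝ :=
  α • (Matrix.of fun _ _ => (1 : ℝ)) + (1 - (r : ℝ) * α) • (1 : Matrix (Fin r) (Fin r) ℝ)

set_option maxHeartbeats 1000000

/-- The inverse of `H_p` is `(1 - rα)⁻¹(−α E + I)`, and its induced 1-norm
(maximum column ℓ1-norm) equals `(1/r)[2(r-1)^{3/2}(p/q) − (r−2)]`, which satisfies
`√(r−1)·(p/q) ≤ ‖H_p⁻¹‖₁ ≤ 2√(r−1)·(p/q) − 1 ≤ 2r − 3`. -/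
theorem stmt10 (r : ℕ) (hr : 2 ≤ r) (p q α : ℝ) (hp1 : 1 ≤ p)
    (hpr : p ≤ Real.sqrt ((r : ℝ) - 1))
    (hq : q = Real.sqrt ((r : ℝ) - p ^ 2)) (hq0 : 0 < q)
    (hα : α = (1 / (r : ℝ)) * (1 - (1 / Real.sqrt ((r : ℝ) - 1)) * (q / p)))
    (n1 : ℝ)
    (hn1 : n1 = Finset.univ.sup' ⟨⟨0, by omega⟩, Finset.mem_univ _⟩
      (fun j : Fin r => ∑ i, |(HpMatrix r α)⁻¹ i j|)) :
    (HpMatrix r α)⁻¹ =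
      (1 - (r : ℝ) * α)⁻¹ •
        ((-α) • (Matrix.of fun _ _ => (1 : ℝ)) + (1 : Matrix (Fin r) (Fin r) ℝ)) ∧
    n1 = (1 / (r : ℝ)) *
      (2 * (((r : ℝ) - 1) * Real.sqrt ((r : ℝ) - 1)) * (p / q) - ((r : ℝ) - 2)) ∧
    Real.sqrt ((r : ℝ) - 1) * (p / q) ≤ n1 ∧
    n1 ≤ 2 * Real.sqrt ((r : ℝ) - 1) * (p / q) - 1 ∧
    2 * Real.sqrt ((r : ℝ) - 1) * (p / q) - 1 ≤ 2 * (r : ℝ) - 3 := by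
  have hr2 : (2:ℝ) ≤ (r:ℝ) := by exact_mod_cast hr
  have hr0 : (0:ℝ) < (r:ℝ) := by linarith
  set s := Real.sqrt ((r : ℝ) - 1) with hs
  have hs2 : s ^ 2 = (r:ℝ) - 1 := Real.sq_sqrt (by linarith)
  have hs1 : 1 ≤ s := by nlinarith [Real.sqrt_nonneg ((r:ℝ) - 1)]
  have hs0 : 0 < s := by linarith
  have hp0 : 0 < p := by linarith
  have hpr2 : p ^ 2 ≤ (r:ℝ) - 1 := by nlinarith
  have hq2 : q ^ 2 = (r:ℝ) - p ^ 2 := by rw [hq]; exact Real.sq_sqrt (by nlinarith)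
  have hqsp : q ≤ s * p := by
    have hp2 : 1 ≤ p ^ 2 := by nlinarith
    have hrp : (0:ℝ) ≤ (r:ℝ) * (p ^ 2 - 1) := mul_nonneg hr0.le (by linarith)
    have e : (s * p) ^ 2 = ((r:ℝ) - 1) * p ^ 2 := by rw [mul_pow, hs2]
    have key : q ^ 2 ≤ (s * p) ^ 2 := by nlinarith [hrp, e]
    exact le_of_pow_le_pow_left₀ two_ne_zero (by positivity) key
  have hpsq : p ≤ s * q := by
    have e : (s * q) ^ 2 = ((r:ℝ) - 1) * ((r:ℝ) - p ^ 2) := by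
      rw [mul_pow, hs2, hq2]
    have h1 : ((r:ℝ) - 1) * 1 ≤ ((r:ℝ) - 1) * ((r:ℝ) - p ^ 2) :=
      mul_le_mul_of_nonneg_left (by linarith) (by linarith)
    have key : p ^ 2 ≤ (s * q) ^ 2 := by linarith
    exact le_of_pow_le_pow_left₀ two_ne_zero (by positivity) key
  have hc : 1 - (r:ℝ) * α = q / (s * p) := by
    rw [hα]; field_simp; ring
  have hc0 : 0 < 1 - (r:ℝ) * α := by rw [hc]; positivity
  have hα0 : 0 ≤ α := by
    have h2 : (1 / s) * (q / p) ≤ 1 := by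
      rw [div_mul_div_comm, one_mul, div_le_one (by positivity)]; exact hqsp
    rw [hα]
    exact mul_nonneg (by positivity) (by linarith)
  have hα1 : α ≤ 1 := by nlinarith
  -- the inverse
  have hE : ((Matrix.of fun _ _ => (1:ℝ)) : Matrix (Fin r) (Fin r) ℝ) * (Matrix.of fun _ _ => (1:ℝ))
      = (r:ℝ) • ((Matrix.of fun _ _ => (1:ℝ)) : Matrix (Fin r) (Fin r) ℝ) := by
    ext i j; simp [Matrix.mul_apply]
  have hmul : HpMatrix r α * ((-α) • (Matrix.of fun _ _ => (1:ℝ))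
        + (1 : Matrix (Fin r) (Fin r) ℝ))
      = (1 - (r:ℝ) * α) • (1 : Matrix (Fin r) (Fin r) ℝ) := by
    rw [HpMatrix]
    simp only [add_mul, mul_add, Matrix.smul_mul, Matrix.mul_smul,
      Matrix.one_mul, Matrix.mul_one, hE]
    module
  have hinv : HpMatrix r α *
      ((1 - (r:ℝ) * α)⁻¹ • ((-α) • (Matrix.of fun _ _ => (1:ℝ))
        + (1 : Matrix (Fin r) (Fin r) ℝ))) = 1 := by
    rw [Matrix.mul_smul, hmul, smul_smul, inv_mul_cancel₀ (ne_of_gt hc0), one_smul]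
  have h1 : (HpMatrix r α)⁻¹ =
      (1 - (r:ℝ) * α)⁻¹ • ((-α) • (Matrix.of fun _ _ => (1:ℝ))
        + (1 : Matrix (Fin r) (Fin r) ℝ)) := Matrix.inv_eq_right_inv hinv
  refine ⟨h1, ?_⟩
  -- column sums
  have hcol : ∀ j : Fin r, (∑ i, |(HpMatrix r α)⁻¹ i j|)
      = (1 - (r:ℝ)*α)⁻¹ * (1 + ((r:ℝ) - 2) * α) := by
    intro j
    have hval : ∀ i : Fin r, |(HpMatrix r α)⁻¹ i j| =
        (1 - (r:ℝ)*α)⁻¹ * α + (if i = j then (1 - (r:ℝ)*α)⁻¹ * (1 - 2*α) else 0) := by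
      intro i
      rw [h1]
      simp only [Matrix.smul_apply, Matrix.add_apply, Matrix.of_apply,
        Matrix.one_apply, smul_eq_mul]
      by_cases h : i = j
      · rw [if_pos h, if_pos h]
        have hnn : (0:ℝ) ≤ (1 - (r:ℝ)*α)⁻¹ * (-α * 1 + 1) :=
          mul_nonneg (inv_nonneg.mpr hc0.le) (by linarith)
        rw [abs_of_nonneg hnn]; ring
      · rw [if_neg h, if_neg h]
        have hnp : (1 - (r:ℝ)*α)⁻¹ * (-α * 1 + 0) ≤ 0 :=
          mul_nonpos_of_nonneg_of_nonpos (inv_nonneg.mpr hc0.le) (by linarith)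
        rw [abs_of_nonpos hnp]; ring
    rw [Finset.sum_congr rfl (fun i _ => hval i), Finset.sum_add_distrib,
      Finset.sum_const, Finset.sum_ite_eq' Finset.univ j, if_pos (Finset.mem_univ j)]
    simp only [Finset.card_univ, Fintype.card_fin, nsmul_eq_mul]
    ring
  have hsup : n1 = (1 - (r:ℝ)*α)⁻¹ * (1 + ((r:ℝ) - 2) * α) := by
    rw [hn1]
    rw [show (fun j : Fin r => ∑ i, |(HpMatrix r α)⁻¹ i j|)
      = fun _ : Fin r => (1 - (r:ℝ)*α)⁻¹ * (1 + ((r:ℝ) - 2) * α) from funext hcol]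
    exact Finset.sup'_const _ _
  have hn1v : n1 = (1 / (r:ℝ)) * (2 * (((r:ℝ) - 1) * s) * (p / q) - ((r:ℝ) - 2)) := by
    rw [hsup, hc, hα]
    field_simp
    ring
  have ht1 : 1 ≤ s * (p / q) := by
    rw [← mul_div_assoc, le_div_iff₀ hq0, one_mul]; linarith
  have ht2 : s * (p / q) ≤ (r:ℝ) - 1 := by
    rw [← mul_div_assoc, div_le_iff₀ hq0]
    calc s * p ≤ s * (s * q) := mul_le_mul_of_nonneg_left hpsq hs0.le
      _ = ((r:ℝ) - 1) * q := by rw [show s * (s * q) = s ^ 2 * q from by ring, hs2]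
  refine ⟨hn1v, ?_, ?_, ?_⟩
  · rw [hn1v, div_mul_eq_mul_div, le_div_iff₀ hr0]
    nlinarith [mul_nonneg (show (0:ℝ) ≤ (r:ℝ) - 2 by linarith)
      (show (0:ℝ) ≤ s * (p / q) - 1 by linarith)]
  · rw [hn1v, div_mul_eq_mul_div, div_le_iff₀ hr0]
    nlinarith
  · linarith
end

section
/- For matrices A, M ∈ R^{m×r}, det((A+M)^T(A+M)) ≤ det(A^T A) + (‖A‖ + ‖M‖)^{2r} − ‖A‖^{2r}, where ‖·‖ denotes the spectral norm. -/
open scoped BigOperators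
open Matrix

/-- Spectral norm (operator 2-norm) of a matrix. -/
noncomputable def specNorm {m n : Type*} [Fintype m] [Fintype n] [DecidableEq n]
    (A : Matrix m n ℝ) : ℝ :=
  ‖LinearMap.toContinuousLinearMap (Matrix.toEuclideanLin A)‖

/-!
The volume `√det(BᵀB)` spanned by the columns of `B` is, as a function of one column with the
others fixed, the square root of a positive semidefinite symmetric bilinear form, hence
subadditive in that column (Cauchy–Schwarz). By Hadamard's inequality it is at most the product
of the column norms, and every column norm is at most the spectral norm.
Turn `A` into `A + M` one column at a time: replacing column `k` raises the volume by at most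
the volume of the matrix whose `k`-th column is that of `M`, which Hadamard bounds by `‖M‖` times
the bounds on the other columns (`‖A‖ + ‖M‖` for those already replaced, `‖A‖` for the rest).
The increments telescope to `√det((A+M)ᵀ(A+M)) ≤ √det(AᵀA) + (‖A‖ + ‖M‖)^r - ‖A‖^r`;
squaring, with `√det(AᵀA) ≤ ‖A‖^r`, gives the theorem.
-/

theorem LinearMap.BilinForm.sqrt_apply_add_le {M : Type*} [AddCommGroup M] [Module ℝ M]
    (B : LinearMap.BilinForm ℝ M) (hs : ∀ x, 0 ≤ B x x) (hB : LinearMap.IsSymm B) (x y : M) :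
    √(B (x + y) (x + y)) ≤ √(B x x) + √(B y y) := by
  have hcs : B x y ≤ √(B x x) * √(B y y) := by
    rw [← Real.sqrt_mul (hs x)]
    exact Real.le_sqrt_of_sq_le (B.apply_sq_le_of_symm hs hB x y)
  have hsymm : B y x = B x y := (hB.eq x y).symm
  rw [Real.sqrt_le_left (by positivity)]
  simp only [map_add, LinearMap.add_apply, hsymm]
  nlinarith [Real.sq_sqrt (hs x), Real.sq_sqrt (hs y)]

theorem Finset.prod_update_add {ι R : Type*} [Fintype ι] [DecidableEq ι] [CommSemiring R]
    (f : ι → R) (k : ι) (u v : R) :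
    ∏ j, Function.update f k (u + v) j =
      ∏ j, Function.update f k u j + ∏ j, Function.update f k v j := by
  simp only [Finset.prod_update_of_mem (Finset.mem_univ k), add_mul]

theorem specNorm_nonneg {m n : Type*} [Fintype m] [Fintype n] [DecidableEq n]
    (A : Matrix m n ℝ) : 0 ≤ specNorm A :=
  norm_nonneg _

namespace Matrix

section Hadamard

variable {n : Type*} [Fintype n] [DecidableEq n] {P : Matrix n n ℝ}

theorem PosSemidef.det_le_exp_trace_sub_card (hP : P.PosSemidef) :
    P.det ≤ Real.exp (P.trace - Fintype.card n) := by
  have hsub : P.trace - Fintype.card n = ∑ i, (hP.1.eigenvalues i - 1) := by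
    simp [hP.1.trace_eq_sum_eigenvalues, Finset.sum_sub_distrib]
  rw [hP.1.det_eq_prod_eigenvalues, hsub, Real.exp_sum]
  refine Finset.prod_le_prod (fun i _ => by simpa using hP.eigenvalues_nonneg i) fun i _ => ?_
  simpa using Real.add_one_le_exp (hP.1.eigenvalues i - 1)

theorem PosSemidef.det_le_prod_diag (hP : P.PosSemidef) : P.det ≤ ∏ i, P i i := by
  have hdiag (i : n) : 0 ≤ P i i := by simpa using hP.diag_nonneg (i := i)
  by_cases! hzero : ∃ i, P i i = 0
  · obtain ⟨i, hi⟩ := hzero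
    have hcol : P *ᵥ Pi.single i 1 = 0 :=
      (hP.dotProduct_mulVec_zero_iff _).1 (by simpa [mulVec_single_one] using hi)
    rw [det_eq_zero_of_column_eq_zero i fun j => by simpa using congrFun hcol j]
    exact Finset.prod_nonneg fun j _ => hdiag j
  have hpos (i : n) : 0 < P i i := (hdiag i).lt_of_ne' (hzero i)
  -- rescaled to unit diagonal, the bound `det ≤ exp (trace - card)` becomes `det ≤ 1`
  set d : n → ℝ := fun i => (√(P i i))⁻¹
  have hd (i : n) : d i * d i = (P i i)⁻¹ := by rw [← mul_inv, Real.mul_self_sqrt (hpos i).le]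
  have hQ : (diagonal d * P * diagonal d).PosSemidef := by
    simpa using hP.mul_mul_conjTranspose_same (diagonal d)
  have hQtrace : (diagonal d * P * diagonal d).trace = Fintype.card n := by
    have (i : n) : d i * P i i * d i = 1 := by
      rw [mul_right_comm, hd, inv_mul_cancel₀ (hpos i).ne']
    simp [trace, mul_diagonal, diagonal_mul, this]
  have hQdet : (diagonal d * P * diagonal d).det = P.det / ∏ i, P i i := by
    rw [det_mul, det_mul, det_diagonal, div_eq_inv_mul, ← Finset.prod_inv_distrib, mul_comm,
      ← mul_assoc, ← Finset.prod_mul_distrib, Finset.prod_congr rfl fun i _ => hd i]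
  have := hQ.det_le_exp_trace_sub_card
  rwa [hQtrace, sub_self, Real.exp_zero, hQdet,
    div_le_one (Finset.prod_pos fun i _ => hpos i)] at this

end Hadamard

variable {m n : Type*}

def addOnCols [DecidableEq n] (A M : Matrix m n ℝ) (S : Finset n) : Matrix m n ℝ :=
  of fun i j => if j ∈ S then A i j + M i j else A i j

theorem addOnCols_empty [DecidableEq n] (A M : Matrix m n ℝ) : A.addOnCols M ∅ = A := by
  ext; simp [addOnCols]

theorem addOnCols_univ [Fintype n] [DecidableEq n] (A M : Matrix m n ℝ) :
    A.addOnCols M Finset.univ = A + M := by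
  ext; simp [addOnCols]

theorem addOnCols_insert [DecidableEq n] (A M : Matrix m n ℝ) (S : Finset n) (k : n) :
    A.addOnCols M (insert k S) = (A.addOnCols M S).updateCol k (Aᵀ k + Mᵀ k) := by
  ext i j
  by_cases hj : j = k
  · subst hj; simp [addOnCols]
  · simp [addOnCols, hj]

theorem updateCol_addOnCols_of_notMem [DecidableEq n] {A : Matrix m n ℝ} (M : Matrix m n ℝ)
    {S : Finset n} {k : n} (hk : k ∉ S) :
    (A.addOnCols M S).updateCol k (Aᵀ k) = A.addOnCols M S := by
  ext i j
  by_cases hj : j = k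
  · subst hj; simp [addOnCols, hk]
  · simp [hj]

variable [Fintype m]

noncomputable def colNorm (B : Matrix m n ℝ) (j : n) : ℝ :=
  ‖(WithLp.toLp 2 (Bᵀ j) : EuclideanSpace ℝ m)‖

theorem colNorm_nonneg (B : Matrix m n ℝ) (j : n) : 0 ≤ B.colNorm j := norm_nonneg _

theorem colNorm_add_le (A M : Matrix m n ℝ) (j : n) :
    (A + M).colNorm j ≤ A.colNorm j + M.colNorm j :=
  norm_add_le (WithLp.toLp 2 (Aᵀ j) : EuclideanSpace ℝ m) (WithLp.toLp 2 (Mᵀ j))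

theorem colNorm_sq (B : Matrix m n ℝ) (j : n) : B.colNorm j ^ 2 = (Bᵀ * B) j j := by
  rw [colNorm, EuclideanSpace.norm_sq_eq]
  simp [mul_apply, sq]

theorem colNorm_updateCol [DecidableEq n] (B : Matrix m n ℝ) (k : n) (c : m → ℝ) (j : n) :
    (B.updateCol k c).colNorm j =
      if j = k then ‖(WithLp.toLp 2 c : EuclideanSpace ℝ m)‖ else B.colNorm j := by
  rw [colNorm, colNorm, ← updateRow_transpose]
  by_cases h : j = k
  · simp [h]
  · simp [h, updateRow_ne]

theorem colNorm_addOnCols [DecidableEq n] (A M : Matrix m n ℝ) (S : Finset n) (j : n) :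
    (A.addOnCols M S).colNorm j = if j ∈ S then (A + M).colNorm j else A.colNorm j := by
  rw [colNorm, colNorm, colNorm]
  split_ifs with hj <;> congr 2 <;> ext i <;> simp [addOnCols, hj]

theorem colNorm_le_specNorm [Fintype n] [DecidableEq n] (B : Matrix m n ℝ) (j : n) :
    B.colNorm j ≤ specNorm B := by
  have h := (LinearMap.toContinuousLinearMap (toEuclideanLin B)).le_opNorm (PiLp.single 2 j 1)
  simp only [LinearMap.coe_toContinuousLinearMap', toLpLin_apply, PiLp.ofLp_single,
    mulVec_single_one, PiLp.norm_single, norm_one, mul_one] at h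
  exact h

variable [Fintype n]

theorem posSemidef_transpose_mul_self (B : Matrix m n ℝ) : (Bᵀ * B).PosSemidef := by
  simpa using posSemidef_conjTranspose_mul_self B

variable [DecidableEq n]

theorem sqrt_det_gram_le_prod (B : Matrix m n ℝ) {b : n → ℝ} (hb : ∀ j, B.colNorm j ≤ b j) :
    √(Bᵀ * B).det ≤ ∏ j, b j := by
  rw [Real.sqrt_le_left (Finset.prod_nonneg fun j _ => (B.colNorm_nonneg j).trans (hb j)),
    ← Finset.prod_pow]
  refine B.posSemidef_transpose_mul_self.det_le_prod_diag.trans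
    (Finset.prod_le_prod (fun j _ => ?_) fun j _ => ?_)
  · rw [← colNorm_sq]; positivity
  · rw [← colNorm_sq]; exact pow_le_pow_left₀ (B.colNorm_nonneg j) (hb j) 2

noncomputable def updateColGramDet (W : Matrix m n ℝ) (j : n) :
    LinearMap.BilinForm ℝ (m → ℝ) :=
  LinearMap.mk₂ ℝ (fun x y => ((W.updateCol j x)ᵀ * W.updateCol j y).det)
    (fun x x' y => by
      simp only [← updateRow_transpose, updateRow_mul, add_vecMul, det_updateRow_add])
    (fun c x y => by
      simp only [← updateRow_transpose, updateRow_mul, smul_vecMul, det_updateRow_smul,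
        smul_eq_mul])
    (fun x y y' => by simp only [mul_updateCol, mulVec_add, det_updateCol_add])
    (fun c x y => by simp only [mul_updateCol, mulVec_smul, det_updateCol_smul, smul_eq_mul])

theorem sqrt_det_gram_updateCol_add_le (W : Matrix m n ℝ) (j : n) (x y : m → ℝ) :
    √((W.updateCol j (x + y))ᵀ * W.updateCol j (x + y)).det ≤
      √((W.updateCol j x)ᵀ * W.updateCol j x).det +
        √((W.updateCol j y)ᵀ * W.updateCol j y).det :=
  (W.updateColGramDet j).sqrt_apply_add_le
    (fun x => (posSemidef_transpose_mul_self _).det_nonneg)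
    ⟨fun x y => by
      simp only [updateColGramDet, LinearMap.mk₂_apply, RingHom.id_apply]
      rw [← det_transpose, transpose_mul, transpose_transpose]⟩ x y

theorem sqrt_det_gram_addOnCols_le (A M : Matrix m n ℝ) {a t : n → ℝ}
    (ha : ∀ j, A.colNorm j ≤ a j) (ht : ∀ j, M.colNorm j ≤ t j) (S : Finset n) :
    √((A.addOnCols M S)ᵀ * A.addOnCols M S).det ≤
      √(Aᵀ * A).det + (∏ j, (if j ∈ S then a j + t j else a j) - ∏ j, a j) := by
  induction S using Finset.induction_on with
  | empty => simp [addOnCols_empty]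
  | insert k S hk ih =>
    set C := A.addOnCols M S
    set f : n → ℝ := fun j => if j ∈ S then a j + t j else a j
    have hincrement : √((C.updateCol k (Mᵀ k))ᵀ * C.updateCol k (Mᵀ k)).det ≤
        ∏ j, Function.update f k (t k) j := by
      refine sqrt_det_gram_le_prod _ fun j => ?_
      rw [colNorm_updateCol]
      by_cases hj : j = k
      · subst hj
        rw [if_pos rfl, Function.update_self]
        exact ht j
      · rw [if_neg hj, Function.update_of_ne hj, colNorm_addOnCols]
        simp only [f]
        split_ifs
        · exact (colNorm_add_le A M j).trans (add_le_add (ha j) (ht j))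
        · exact ha j
    have hprod : ∏ j, (if j ∈ insert k S then a j + t j else a j) =
        ∏ j, f j + ∏ j, Function.update f k (t k) j := by
      have hfins : (fun j => if j ∈ insert k S then a j + t j else a j) =
          Function.update f k (a k + t k) := by
        funext j
        by_cases hj : j = k
        · subst hj; simp
        · simp [f, hj]
      have hf : f = Function.update f k (a k) := by simp [f, hk]
      rw [hfins, Finset.prod_update_add, ← hf]
    have hsplit := C.sqrt_det_gram_updateCol_add_le k (Aᵀ k) (Mᵀ k)
    rw [← addOnCols_insert, updateCol_addOnCols_of_notMem M hk] at hsplit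
    rw [hprod]
    linarith

theorem sqrt_det_gram_add_le (A M : Matrix m n ℝ) {a t : n → ℝ}
    (ha : ∀ j, A.colNorm j ≤ a j) (ht : ∀ j, M.colNorm j ≤ t j) :
    √((A + M)ᵀ * (A + M)).det ≤ √(Aᵀ * A).det + (∏ j, (a j + t j) - ∏ j, a j) := by
  simpa [addOnCols_univ] using sqrt_det_gram_addOnCols_le A M ha ht Finset.univ

end Matrix

/-- For `A, M ∈ ℝ^{m×r}`,
`det((A+M)ᵀ(A+M)) ≤ det(AᵀA) + (‖A‖ + ‖M‖)^{2r} − ‖A‖^{2r}`. -/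
theorem stmt13 (m r : ℕ) (A M : Matrix (Fin m) (Fin r) ℝ) :
    ((A + M)ᵀ * (A + M)).det ≤
      (Aᵀ * A).det + (specNorm A + specNorm M) ^ (2 * r) - specNorm A ^ (2 * r) := by
  set a := specNorm A
  set t := specNorm M
  have hvol : √((A + M)ᵀ * (A + M)).det ≤ √(Aᵀ * A).det + ((a + t) ^ r - a ^ r) := by
    simpa using sqrt_det_gram_add_le A M A.colNorm_le_specNorm M.colNorm_le_specNorm
  have hA : √(Aᵀ * A).det ≤ a ^ r := by
    simpa using sqrt_det_gram_le_prod A A.colNorm_le_specNorm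
  have hpow : a ^ r ≤ (a + t) ^ r :=
    pow_le_pow_left₀ (specNorm_nonneg A) (le_add_of_nonneg_right (specNorm_nonneg M)) r
  rw [pow_mul', pow_mul', ← Real.sq_sqrt (posSemidef_transpose_mul_self (A + M)).det_nonneg,
    ← Real.sq_sqrt (posSemidef_transpose_mul_self A).det_nonneg]
  nlinarith [Real.sqrt_nonneg ((A + M)ᵀ * (A + M)).det, Real.sqrt_nonneg (Aᵀ * A).det]
end

section
/- Let x_1 ≥ x_2 ≥ … ≥ x_n ≥ 0 with arithmetic mean A and geometric mean G. Then (√x_1 − √x_n)² ≤ n(A − G), and consequently x_1 − x_n ≤ (√x_1 + √x_n)·√(n(A − G)). -/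
/-!
Replacing the two entries `x i` and `x j` by their geometric mean `√(x i x j)` leaves the product
unchanged and lowers the sum by exactly `(√x i - √x j)²`. Applying AM-GM to the new tuple therefore
gives `n G ≤ n A - (√x i - √x j)²`. The second inequality follows by factoring
`x i - x j = (√x i + √x j)(√x i - √x j)`.
-/

open Finset

namespace Real

variable {ι : Type*} [Fintype ι]

theorem card_mul_geom_mean_le_sum (x : ι → ℝ) (hx : ∀ i, 0 ≤ x i) :
    (Fintype.card ι : ℝ) * (∏ i, x i) ^ ((1 : ℝ) / Fintype.card ι) ≤ ∑ i, x i := by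
  rcases isEmpty_or_nonempty ι with hι | hι
  · simp
  have hcard : (0 : ℝ) < Fintype.card ι := by exact_mod_cast Fintype.card_pos
  have amgm := geom_mean_le_arith_mean univ (fun _ ↦ 1) x (fun _ _ ↦ zero_le_one)
    (by simpa using hcard) (fun i _ ↦ hx i)
  simp only [rpow_one, sum_const, card_univ, nsmul_eq_mul, mul_one, one_mul] at amgm
  rw [one_div, mul_comm]
  exact (le_div_iff₀ hcard).1 amgm

@[to_additive]
theorem _root_.Fintype.prod_eq_mul_mul_prod_compl_pair {M : Type*} [CommMonoid M] [DecidableEq ι]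
    (f : ι → M) {i j : ι} (hij : i ≠ j) : ∏ k, f k = f i * f j * ∏ k ∈ {i, j}ᶜ, f k := by
  rw [← prod_mul_prod_compl {i, j}, prod_pair hij]

theorem sq_sqrt_sub_sqrt_le_sum_sub_card_mul_geom_mean (x : ι → ℝ) (hx : ∀ i, 0 ≤ x i) (i j : ι) :
    (√(x i) - √(x j)) ^ 2 ≤
      ∑ k, x k - Fintype.card ι * (∏ k, x k) ^ ((1 : ℝ) / Fintype.card ι) := by
  have amgm_x := card_mul_geom_mean_le_sum x hx
  obtain rfl | hij := eq_or_ne i j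
  · simpa using amgm_x
  classical
  set c := √(x i * x j)
  set y := Function.update (Function.update x i c) j c
  have hyi : y i = c := by simp [y, hij]
  have hyj : y j = c := by simp [y]
  have hy_compl : ∀ k ∈ ({i, j} : Finset ι)ᶜ, y k = x k := fun k hk ↦ by
    simp only [mem_compl, mem_insert, mem_singleton, not_or] at hk
    simp [y, hk.1, hk.2]
  have hprod : ∏ k, y k = ∏ k, x k := by
    rw [Fintype.prod_eq_mul_mul_prod_compl_pair y hij, Fintype.prod_eq_mul_mul_prod_compl_pair x hij,
      hyi, hyj, prod_congr rfl hy_compl, mul_self_sqrt (mul_nonneg (hx i) (hx j))]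
  have hsum : ∑ k, y k = ∑ k, x k - (√(x i) - √(x j)) ^ 2 := by
    rw [Fintype.sum_eq_add_add_sum_compl_pair y hij, Fintype.sum_eq_add_add_sum_compl_pair x hij,
      hyi, hyj, sum_congr rfl hy_compl, sub_sq, sq_sqrt (hx i), sq_sqrt (hx j),
      show c = √(x i) * √(x j) from sqrt_mul (hx i) _]
    ring
  have hy : ∀ k, 0 ≤ y k := fun k ↦ by
    by_cases hk : k ∈ ({i, j} : Finset ι)ᶜ
    · exact hy_compl k hk ▸ hx k
    · simp only [mem_compl, mem_insert, mem_singleton, not_not] at hk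
      rcases hk with rfl | rfl <;> simp [hyi, hyj, c, sqrt_nonneg]
  have amgm_y := card_mul_geom_mean_le_sum y hy
  rw [hprod, hsum] at amgm_y
  linarith

theorem sub_le_sqrt_add_sqrt_mul_sqrt {a b t : ℝ} (ha : 0 ≤ a) (hb : 0 ≤ b)
    (h : (√a - √b) ^ 2 ≤ t) : a - b ≤ (√a + √b) * √t :=
  calc a - b = (√a + √b) * (√a - √b) := by
        linear_combination sq_sqrt hb - sq_sqrt ha
    _ ≤ (√a + √b) * |√a - √b| := by gcongr; exact le_abs_self _
    _ ≤ (√a + √b) * √t := by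
        gcongr
        rw [← sqrt_sq_eq_abs]
        exact sqrt_le_sqrt h

end Real

theorem stmt14_general (n : ℕ) (x : Fin (n + 1) → ℝ) (hx0 : ∀ i, 0 ≤ x i)
    (A G : ℝ) (hA : A = (∑ i, x i) / ((n : ℝ) + 1))
    (hG : G = (∏ i, x i) ^ ((1 : ℝ) / ((n : ℝ) + 1))) :
    (Real.sqrt (x 0) - Real.sqrt (x (Fin.last n))) ^ 2 ≤ ((n : ℝ) + 1) * (A - G) ∧
    x 0 - x (Fin.last n) ≤
      (Real.sqrt (x 0) + Real.sqrt (x (Fin.last n))) *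
        Real.sqrt (((n : ℝ) + 1) * (A - G)) := by
  have hgap : ((n : ℝ) + 1) * (A - G) =
      ∑ i, x i - Fintype.card (Fin (n + 1)) * (∏ i, x i) ^ ((1 : ℝ) / Fintype.card (Fin (n + 1))) := by
    rw [hA, hG, Fintype.card_fin, Nat.cast_succ]
    field_simp
  have first := Real.sq_sqrt_sub_sqrt_le_sum_sub_card_mul_geom_mean x hx0 0 (Fin.last n)
  rw [← hgap] at first
  exact ⟨first, Real.sub_le_sqrt_add_sqrt_mul_sqrt (hx0 _) (hx0 _) first⟩

/-- AM-GM stability: for `x_1 ≥ … ≥ x_n ≥ 0` with arithmetic mean `A` and geometric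
mean `G`, `(√x_1 − √x_n)² ≤ n(A − G)` and
`x_1 − x_n ≤ (√x_1 + √x_n)·√(n(A − G))`. -/
theorem stmt14 (n : ℕ) (x : Fin (n + 1) → ℝ) (hx0 : ∀ i, 0 ≤ x i)
    (hdec : ∀ i j : Fin (n + 1), i ≤ j → x j ≤ x i)
    (A G : ℝ) (hA : A = (∑ i, x i) / ((n : ℝ) + 1))
    (hG : G = (∏ i, x i) ^ ((1 : ℝ) / ((n : ℝ) + 1))) :
    (Real.sqrt (x 0) - Real.sqrt (x (Fin.last n))) ^ 2 ≤ ((n : ℝ) + 1) * (A - G) ∧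
    x 0 - x (Fin.last n) ≤
      (Real.sqrt (x 0) + Real.sqrt (x (Fin.last n))) *
        Real.sqrt (((n : ℝ) + 1) * (A - G)) :=
  stmt14_general n x hx0 A G hA hG
end

section
/- If 0 ≤ x ≤ 1/(nc) ≤ 1 for a positive integer n and positive real c, then (1+x)^n − 1 ≤ ncx(e^{1/c} − 1) and 1 − (1−x)^n ≥ ncx(1 − e^{−1/c}). -/
/-!
Put `b = 1/(nc)` and `t = ncx ∈ [0, 1]`, so that `x = t b`. Convexity of `y ↦ yⁿ` on `[0, ∞)` bounds
`(1 ± t b)ⁿ` by the chord through `1` and `1 ± b`, i.e. `(1 ± tb)ⁿ - 1 ≤ t ((1 ± b)ⁿ - 1)`, and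
`(1 ± b)ⁿ ≤ exp (± n b) = exp (± 1/c)` since `1 + y ≤ exp y`.
-/

open Real

lemma one_add_pow_le_exp_nat_mul {y : ℝ} (hy : -1 ≤ y) (n : ℕ) : (1 + y) ^ n ≤ exp (n * y) := by
  rw [exp_nat_mul]
  exact pow_le_pow_left₀ (by linarith) (by linarith [add_one_le_exp y]) n

lemma one_add_mul_pow_le_chord {y t : ℝ} (hy : -1 ≤ y) (ht0 : 0 ≤ t) (ht1 : t ≤ 1) (n : ℕ) :
    (1 + t * y) ^ n ≤ 1 + t * ((1 + y) ^ n - 1) := by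
  have h := (convexOn_pow n).2 (Set.mem_Ici.2 zero_le_one) (Set.mem_Ici.2 (by linarith : 0 ≤ 1 + y))
    (sub_nonneg.2 ht1) ht0 (sub_add_cancel 1 t)
  simp only [smul_eq_mul, one_pow, mul_one] at h
  calc (1 + t * y) ^ n = (1 - t + t * (1 + y)) ^ n := by ring_nf
    _ ≤ 1 - t + t * (1 + y) ^ n := h
    _ = 1 + t * ((1 + y) ^ n - 1) := by ring

lemma one_add_mul_pow_sub_one_le {y t : ℝ} (hy : -1 ≤ y) (ht0 : 0 ≤ t) (ht1 : t ≤ 1) (n : ℕ) :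
    (1 + t * y) ^ n - 1 ≤ t * (exp (n * y) - 1) := by
  have := mul_le_mul_of_nonneg_left (one_add_pow_le_exp_nat_mul hy n) ht0
  linarith [one_add_mul_pow_le_chord hy ht0 ht1 n]

/-- If `0 ≤ x ≤ 1/(nc) ≤ 1` for a positive integer `n` and `c > 0`, then
`(1+x)^n − 1 ≤ ncx(e^{1/c} − 1)` and `1 − (1−x)^n ≥ ncx(1 − e^{−1/c})`. -/
theorem stmt15 (n : ℕ) (hn : 1 ≤ n) (c x : ℝ) (hc : 0 < c) (hx0 : 0 ≤ x)
    (hx1 : x ≤ 1 / ((n : ℝ) * c)) (h1 : 1 / ((n : ℝ) * c) ≤ 1) :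
    (1 + x) ^ n - 1 ≤ (n : ℝ) * c * x * (Real.exp (1 / c) - 1) ∧
    (n : ℝ) * c * x * (1 - Real.exp (-1 / c)) ≤ 1 - (1 - x) ^ n := by
  have hnc : (0 : ℝ) < n * c := mul_pos (by exact_mod_cast hn) hc
  set b := 1 / ((n : ℝ) * c)
  have hb0 : 0 ≤ b := by positivity
  have ht0 : 0 ≤ n * c * x := by positivity
  have ht1 : n * c * x ≤ 1 := by rwa [le_div_iff₀' hnc] at hx1
  have hx : n * c * x * b = x := by simp only [b]; field_simp
  have hnb : n * b = 1 / c := by simp only [b]; field_simp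
  constructor
  · simpa only [hx, hnb] using one_add_mul_pow_sub_one_le (y := b) (by linarith) ht0 ht1 n
  · have h := one_add_mul_pow_sub_one_le (y := -b) (by linarith) ht0 ht1 n
    rw [mul_neg, hx, mul_neg, hnb, ← sub_eq_add_neg, ← neg_div] at h
    linarith
end

section
/- Let R ∈ R^{r×r} with QR factorization R = QT (Q orthogonal, T upper triangular with columns t_j). If ‖r_j‖ ≤ L for every column r_j of R and det(R)² ≥ d, then for any two distinct columns i < j, ‖r_i − r_j‖² ≥ |t_{j,j}|² ≥ d / L^{2r−2}. -/
open scoped BigOperators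
open Matrix

/-- Let `R = QT` be a QR factorization (`Q` orthogonal, `T` upper triangular).
If every column of `R` has Euclidean norm at most `L` and `det(R)² ≥ d`, then for
distinct columns `i < j`, `‖r_i − r_j‖² ≥ t_{jj}² ≥ d/L^{2r−2}`. -/
theorem stmt19 (r : ℕ) (R Q T : Matrix (Fin r) (Fin r) ℝ)
    (hQR : R = Q * T) (hQ : Qᵀ * Q = 1)
    (hT : ∀ i j : Fin r, j < i → T i j = 0)
    (L d : ℝ) (hL0 : 0 < L) (hd : 0 < d) (hdet : d ≤ R.det ^ 2)
    (hcol : ∀ j : Fin r, ‖(WithLp.equiv 2 (Fin r → ℝ)).symm (fun i => R i j)‖ ≤ L) :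
    ∀ i j : Fin r, i < j →
      T j j ^ 2 ≤ ‖(WithLp.equiv 2 (Fin r → ℝ)).symm (fun k => R k i - R k j)‖ ^ 2 ∧
      d / L ^ (2 * r - 2) ≤ T j j ^ 2 := by
  intro i j hij
  have hnorm : ∀ v : Fin r → ℝ,
      ‖(WithLp.equiv 2 (Fin r → ℝ)).symm v‖ ^ 2 = ∑ k, v k ^ 2 := by
    intro v
    rw [EuclideanSpace.norm_eq, Real.sq_sqrt (by positivity)]
    simp [sq_abs]
  have hRR : Rᵀ * R = Tᵀ * T := by
    rw [hQR, Matrix.transpose_mul, Matrix.mul_assoc, ← Matrix.mul_assoc Qᵀ, hQ,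
      Matrix.one_mul]
  have hS : ∀ a b : Fin r, ∑ k, R k a * R k b = ∑ k, T k a * T k b := by
    intro a b
    have h := congrFun (congrFun hRR a) b
    simpa [Matrix.mul_apply, Matrix.transpose_apply, mul_comm] using h
  have hScol : ∀ a : Fin r, ∑ k, T k a ^ 2 ≤ L ^ 2 := by
    intro a
    have h1 : ∑ k, T k a ^ 2 = ∑ k, R k a ^ 2 := by
      simpa [sq] using (hS a a).symm
    have h3 : ‖(WithLp.equiv 2 (Fin r → ℝ)).symm (fun i => R i a)‖ ^ 2 ≤ L ^ 2 :=
      pow_le_pow_left₀ (norm_nonneg _) (hcol a) 2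
    rw [hnorm] at h3
    calc ∑ k, T k a ^ 2 = ∑ k, R k a ^ 2 := h1
      _ ≤ L ^ 2 := h3
  constructor
  · -- first inequality
    have expand : ∀ (A : Matrix (Fin r) (Fin r) ℝ),
        ∑ k, (A k i - A k j) ^ 2
          = ∑ k, A k i * A k i - 2 * ∑ k, A k i * A k j + ∑ k, A k j * A k j := by
      intro A
      rw [Finset.mul_sum, ← Finset.sum_sub_distrib, ← Finset.sum_add_distrib]
      exact Finset.sum_congr rfl fun k _ => by ring
    have hdiff : ∑ k, (R k i - R k j) ^ 2 = ∑ k, (T k i - T k j) ^ 2 := by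
      rw [expand R, expand T, hS i i, hS i j, hS j j]
    rw [hnorm, hdiff]
    have hji : T j i = 0 := hT j i hij
    have h := Finset.single_le_sum (f := fun k => (T k i - T k j) ^ 2)
      (fun k _ => sq_nonneg _) (Finset.mem_univ j)
    simpa [hji] using h
  · -- second inequality
    have hdetT : R.det ^ 2 = ∏ k, T k k ^ 2 := by
      have hQdet : Q.det ^ 2 = 1 := by
        have h := congrArg Matrix.det hQ
        simpa [Matrix.det_mul, Matrix.det_transpose, sq] using h
      have hTtri : T.det = ∏ k, T k k :=
        Matrix.det_of_upperTriangular (fun a b h => hT a b h)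
      rw [hQR, Matrix.det_mul, mul_pow, hQdet, one_mul, hTtri, ← Finset.prod_pow]
    have hTkk_le : ∀ k, T k k ^ 2 ≤ L ^ 2 := by
      intro k
      have h := Finset.single_le_sum (f := fun m => T m k ^ 2)
        (fun m _ => sq_nonneg _) (Finset.mem_univ k)
      exact le_trans h (hScol k)
    have hprod : ∏ k, T k k ^ 2 ≤ T j j ^ 2 * L ^ (2 * r - 2) := by
      rw [← Finset.mul_prod_erase Finset.univ _ (Finset.mem_univ j)]
      apply mul_le_mul_of_nonneg_left _ (sq_nonneg _)
      calc ∏ k ∈ Finset.univ.erase j, T k k ^ 2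
          ≤ ∏ k ∈ Finset.univ.erase j, L ^ 2 :=
            Finset.prod_le_prod (fun k _ => sq_nonneg _) (fun k _ => hTkk_le k)
        _ = (L ^ 2) ^ ((Finset.univ.erase j).card) := Finset.prod_const _
        _ = L ^ (2 * r - 2) := by
            rw [Finset.card_erase_of_mem (Finset.mem_univ j), Finset.card_univ,
              Fintype.card_fin, ← pow_mul]
            congr 1
            omega
    have hfin : d ≤ T j j ^ 2 * L ^ (2 * r - 2) :=
      le_trans hdet (by rw [hdetT]; exact hprod)
    exact (div_le_iff₀ (pow_pos hL0 _)).mpr hfin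
end
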